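/- For every integer s ≥ 0, the identity 2^s · (s+1)! − ∑_{k=1}^{s} k · C(s+1, k+1) · (2s−2k−1)!! · (2k−1)!! = (2s+1)!! holds, where C(n,m) denotes the binomial coefficient. (Equivalently, (s+1)! − 2^{−s} ∑_{k=1}^{s} k · C(s+1,k+1) (2s−2k−1)!! (2k−1)!! = (2s+1)!!/2^s.) -/

import Mathlib

/-- The odd double factorial: `oddDF k = (2k-1)!! = 1 * 3 * ⋯ * (2k-1)`,
with the convention `oddDF 0 = (-1)!! = 1`. -/
def oddDF (k : ℕ) : ℕ := ∏ i ∈ Finset.range k, (2 * i + 1)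

lemma oddDF_succ (k : ℕ) : oddDF (k + 1) = oddDF k * (2 * k + 1) :=
  Finset.prod_range_succ _ _

lemma oddDF_zero : oddDF 0 = 1 := rfl

lemma sumE (s : ℕ) :
    ∑ k ∈ Finset.range (s + 1),
      ((s.choose k : ℤ) * oddDF k * oddDF (s - k)) = 2 ^ s * s.factorial := by
  induction s with
  | zero => simp [oddDF]
  | succ s ih =>
    rw [Finset.sum_range_succ']
    have key : ∀ k ∈ Finset.range (s + 1),
        (((s+1).choose (k+1) : ℤ) * oddDF (k+1) * oddDF (s + 1 - (k+1)))
          = (s.choose (k+1) : ℤ) * oddDF (k+1) * oddDF (s + 1 - (k+1))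
            + (2*(k:ℤ)+1) * ((s.choose k : ℤ) * oddDF k * oddDF (s - k)) := by
      intro k hk
      have h1 : s + 1 - (k+1) = s - k := by omega
      rw [h1, Nat.choose_succ_succ, oddDF_succ]
      push_cast
      ring
    rw [Finset.sum_congr rfl key, Finset.sum_add_distrib]
    have h2 : (∑ k ∈ Finset.range (s+2),
          ((s.choose k : ℤ) * oddDF k * oddDF (s + 1 - k)))
        = (∑ k ∈ Finset.range (s+1),
            ((s.choose (k+1) : ℤ) * oddDF (k+1) * oddDF (s + 1 - (k+1))))
          + ((s.choose 0 : ℤ) * oddDF 0 * oddDF (s + 1 - 0)) :=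
      Finset.sum_range_succ' _ _
    have h3 : ∑ k ∈ Finset.range (s+2),
          ((s.choose k : ℤ) * oddDF k * oddDF (s + 1 - k))
        = ∑ k ∈ Finset.range (s+1),
            ((2*((s:ℤ)-k)+1) * ((s.choose k : ℤ) * oddDF k * oddDF (s - k))) := by
      rw [Finset.sum_range_succ, Nat.choose_eq_zero_of_lt (by omega)]
      simp only [Nat.cast_zero, zero_mul, add_zero]
      refine Finset.sum_congr rfl fun k hk => ?_
      have hks : k ≤ s := by simpa [Nat.lt_succ_iff] using hk
      have h4 : s + 1 - k = (s - k) + 1 := by omega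
      have h5 : ((s - k : ℕ) : ℤ) = (s : ℤ) - k := by
        push_cast [Nat.cast_sub hks]; ring
      rw [h4, oddDF_succ]
      push_cast
      rw [h5]
      ring
    have h6 : (∑ k ∈ Finset.range (s+1),
          ((2*(k:ℤ)+1) * ((s.choose k : ℤ) * oddDF k * oddDF (s - k))))
        + (∑ k ∈ Finset.range (s+1),
            ((2*((s:ℤ)-k)+1) * ((s.choose k : ℤ) * oddDF k * oddDF (s - k))))
        = (2*(s:ℤ)+2) * (2 ^ s * s.factorial) := by
      rw [← Finset.sum_add_distrib, ← ih, Finset.mul_sum]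
      refine Finset.sum_congr rfl fun k hk => ?_
      ring
    have hf0 : (((s+1).choose 0 : ℤ) * oddDF 0 * oddDF (s + 1 - 0))
        = ((s.choose 0 : ℤ) * oddDF 0 * oddDF (s + 1 - 0)) := by simp
    have hR : (2*(s:ℤ)+2) * (2 ^ s * s.factorial) = 2 ^ (s+1) * ((s+1).factorial : ℤ) := by
      rw [Nat.factorial_succ]
      push_cast
      ring
    linarith [h2, h3, h6, hf0, hR]

lemma sumT (s : ℕ) :
    ∑ k ∈ Finset.range (s + 1),
      (((s+1).choose (k+1) : ℤ) * oddDF k * oddDF (s - k)) = oddDF (s + 1) := by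
  induction s with
  | zero => simp [oddDF]
  | succ s ih =>
    have key : ∀ k ∈ Finset.range (s + 2),
        (((s+2).choose (k+1) : ℤ) * oddDF k * oddDF (s + 1 - k))
          = ((s+1).choose k : ℤ) * oddDF k * oddDF (s + 1 - k)
            + ((s+1).choose (k+1) : ℤ) * oddDF k * oddDF (s + 1 - k) := by
      intro k hk
      rw [show s + 2 = (s+1) + 1 from rfl, Nat.choose_succ_succ]
      push_cast
      ring
    rw [Finset.sum_congr rfl key, Finset.sum_add_distrib, sumE (s+1)]
    have h3 : ∑ k ∈ Finset.range (s+2),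
          (((s+1).choose (k+1) : ℤ) * oddDF k * oddDF (s + 1 - k))
        = ∑ k ∈ Finset.range (s+1),
            ((2*(s:ℤ)+3) * (((s+1).choose (k+1) : ℤ) * oddDF k * oddDF (s - k))
             - (2*(s:ℤ)+2) * ((s.choose k : ℤ) * oddDF k * oddDF (s - k))) := by
      rw [Finset.sum_range_succ, Nat.choose_eq_zero_of_lt (by omega)]
      simp only [Nat.cast_zero, zero_mul, add_zero]
      refine Finset.sum_congr rfl fun k hk => ?_
      have hks : k ≤ s := by simpa [Nat.lt_succ_iff] using hk
      have h4 : s + 1 - k = (s - k) + 1 := by omega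
      have h5 : ((s - k : ℕ) : ℤ) = (s : ℤ) - k := by
        push_cast [Nat.cast_sub hks]; ring
      have habs : ((s:ℤ)+1) * (s.choose k : ℤ) = ((s+1).choose (k+1) : ℤ) * ((k:ℤ)+1) := by
        have := Nat.add_one_mul_choose_eq s k
        exact_mod_cast congrArg (Nat.cast : ℕ → ℤ) this
      rw [h4, oddDF_succ]
      push_cast
      rw [h5]
      linear_combination (2 * (oddDF k : ℤ) * (oddDF (s-k) : ℤ)) * habs
    rw [h3, Finset.sum_sub_distrib, ← Finset.mul_sum, ← Finset.mul_sum, ih, sumE s,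
      oddDF_succ (s+1), Nat.factorial_succ]
    push_cast
    ring

/-- For every integer `s ≥ 0`,
`2^s (s+1)! − ∑_{k=1}^{s} k · C(s+1, k+1) · (2s−2k−1)!! · (2k−1)!! = (2s+1)!!`. -/
theorem combinatorial_identity (s : ℕ) :
    (2 ^ s * Nat.factorial (s + 1) : ℤ)
      - ∑ k ∈ Finset.Icc 1 s,
          (k : ℤ) * (Nat.choose (s + 1) (k + 1) : ℤ) * (oddDF (s - k) : ℤ) * (oddDF k : ℤ)
      = (oddDF (s + 1) : ℤ) := by
  have hsub : Finset.Icc 1 s ⊆ Finset.range (s + 1) := by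
    intro k hk
    simp only [Finset.mem_Icc] at hk
    simp [Nat.lt_succ_iff, hk.2]
  have hicc : ∑ k ∈ Finset.Icc 1 s,
        (k : ℤ) * (Nat.choose (s + 1) (k + 1) : ℤ) * (oddDF (s - k) : ℤ) * (oddDF k : ℤ)
      = ∑ k ∈ Finset.range (s + 1),
        (k : ℤ) * (Nat.choose (s + 1) (k + 1) : ℤ) * (oddDF (s - k) : ℤ) * (oddDF k : ℤ) := by
    refine (Finset.sum_subset hsub fun k hk hk' => ?_)
    have : k = 0 := by
      simp only [Finset.mem_range] at hk
      simp only [Finset.mem_Icc, not_and, not_le] at hk'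
      omega
    simp [this]
  rw [hicc]
  have key : ∀ k ∈ Finset.range (s + 1),
      (k : ℤ) * (Nat.choose (s + 1) (k + 1) : ℤ) * (oddDF (s - k) : ℤ) * (oddDF k : ℤ)
        = ((s:ℤ)+1) * ((s.choose k : ℤ) * oddDF k * oddDF (s - k))
          - ((s+1).choose (k+1) : ℤ) * oddDF k * oddDF (s - k) := by
    intro k hk
    have habs : ((s:ℤ)+1) * (s.choose k : ℤ) = ((s+1).choose (k+1) : ℤ) * ((k:ℤ)+1) := by
      have := Nat.add_one_mul_choose_eq s k
      exact_mod_cast congrArg (Nat.cast : ℕ → ℤ) this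
    linear_combination (-(oddDF k : ℤ) * (oddDF (s-k) : ℤ)) * habs
  rw [Finset.sum_congr rfl key, Finset.sum_sub_distrib, ← Finset.mul_sum, sumE s, sumT s,
    Nat.factorial_succ]
  push_cast
  ring
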